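/- (Constrained optimum when the CPU cores cap the rate) Let r* ∈ (λL, ∞) be the unique solution of the stationarity equation (r ln 2 / W − 1)·exp(r ln 2 / W − 1) = (α g η (r/(r − λL))² + g η P_s − 1)/e, and let r_M be a maximum supportable rate with λL < r_M < r*. Then z is strictly decreasing on (λL, r_M], so the minimum of z over the feasible set (λL, r_M] is attained uniquely at r = r_M. -/

import Mathlib

/-- The function `u ↦ (u-1)·eᵘ` is strictly increasing on `[0,∞)`. -/
lemma auxMonoExp : StrictMonoOn (fun u : ℝ => (u - 1) * Real.exp u) (Set.Ici 0) := by
  apply strictMonoOn_of_deriv_pos (convex_Ici 0)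
  · exact ((continuous_id.sub continuous_const).mul Real.continuous_exp).continuousOn
  · intro u hu
    rw [interior_Ici] at hu
    have h : HasDerivAt (fun u : ℝ => (u - 1) * Real.exp u)
        (1 * Real.exp u + (u - 1) * Real.exp u) u :=
      ((hasDerivAt_id u).sub_const 1).mul (Real.hasDerivAt_exp u)
    rw [h.deriv]
    nlinarith [Real.exp_pos u, hu, mul_pos hu (Real.exp_pos u)]

set_option maxHeartbeats 1000000 in
/-- Constrained optimum when the CPU cores cap the rate: if `λL < r_M < r*` where `r*`
solves the stationarity equation, then `z` is strictly decreasing on `(λL, r_M]`, so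
the minimum of `z` over `(λL, r_M]` is attained uniquely at `r_M`. -/
theorem constrained_optimum_at_max_rate
    (lam L W g η α E_sw P_sleep κ₁ P_o P_s : ℝ)
    (hlam : 0 < lam) (hL : 0 < L) (hW : 0 < W) (hg : 0 < g) (hη : 0 < η)
    (hα : 0 < α) (hEsw : 0 ≤ E_sw) (hPsleep : 0 ≤ P_sleep) (hκ₁ : 0 ≤ κ₁)
    (hPs : P_s = P_o - P_sleep - 2 * lam * E_sw)
    (z : ℝ → ℝ)
    (hz : ∀ r : ℝ, lam * L < r → z r =
      κ₁ * lam * L + (lam * L / r) * (P_s + ((2 : ℝ) ^ (r / W) - 1) / (g * η))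
        + P_sleep + 2 * lam * E_sw + α * (lam * L / (r - lam * L)))
    (rstar : ℝ) (hrstar : lam * L < rstar)
    (heq : (rstar * Real.log 2 / W - 1) * Real.exp (rstar * Real.log 2 / W - 1) =
      (α * g * η * (rstar / (rstar - lam * L)) ^ 2 + g * η * P_s - 1) / Real.exp 1)
    (rM : ℝ) (hrM₁ : lam * L < rM) (hrM₂ : rM < rstar) :
    StrictAntiOn z (Set.Ioc (lam * L) rM) ∧
    (∀ r : ℝ, lam * L < r → r ≤ rM → r ≠ rM → z rM < z r) := by
  have hA : 0 < lam * L := mul_pos hlam hL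
  set A := lam * L with hAdef
  have hc : 0 < Real.log 2 / W := div_pos (Real.log_pos one_lt_two) hW
  set c := Real.log 2 / W with hcdef
  have hk : 0 < g * η := mul_pos hg hη
  set k := g * η with hkdef
  -- the smooth model function
  set ψ : ℝ → ℝ := fun r => κ₁ * lam * L + (A / r) * (P_s + (Real.exp (c * r) - 1) / k)
      + P_sleep + 2 * lam * E_sw + α * (A / (r - A)) with hψdef
  have hzψ : ∀ r, A < r → z r = ψ r := by
    intro r hr
    rw [hz r hr]
    have h2 : (2 : ℝ) ^ (r / W) = Real.exp (c * r) := by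
      rw [Real.rpow_def_of_pos two_pos, hcdef]
      ring_nf
    rw [h2]
  -- auxiliary function controlling the sign of the derivative
  set G : ℝ → ℝ := fun x => (c * x - 1) * Real.exp (c * x) + 1 - k * P_s
      - α * k * (x / (x - A)) ^ 2 with hGdef
  -- derivative of ψ
  set D : ℝ → ℝ := fun x => (-(A / x ^ 2) * (P_s + (Real.exp (c * x) - 1) / k)
      + A / x * (Real.exp (c * x) * c / k)) + α * -(A / (x - A) ^ 2) with hDdef
  have hasD : ∀ x, A < x → HasDerivAt ψ (D x) x := by
    intro x hx
    have hx0 : x ≠ 0 := ne_of_gt (lt_trans hA hx)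
    have hxA : x - A ≠ 0 := sub_ne_zero.mpr (ne_of_gt hx)
    have h1 : HasDerivAt (fun r : ℝ => A / r) (-(A / x ^ 2)) x := by
      simpa [div_eq_mul_inv, mul_neg] using (hasDerivAt_inv hx0).const_mul A
    have hE : HasDerivAt (fun r : ℝ => Real.exp (c * r)) (Real.exp (c * x) * c) x := by
      simpa using ((hasDerivAt_id x).const_mul c).exp
    have h3 : HasDerivAt (fun r : ℝ => P_s + (Real.exp (c * r) - 1) / k)
        (Real.exp (c * x) * c / k) x := ((hE.sub_const 1).div_const k).const_add P_s
    have h4 := h1.mul h3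
    have h5 : HasDerivAt (fun r : ℝ => A / (r - A)) (-(A / (x - A) ^ 2)) x := by
      have h5a := (((hasDerivAt_id x).sub_const A).inv hxA).const_mul A
      simpa [div_eq_mul_inv, mul_neg, neg_div] using h5a
    have h6 := (((h4.const_add (κ₁ * lam * L)).add_const P_sleep).add_const
        (2 * lam * E_sw)).add (h5.const_mul α)
    simpa [hψdef, hDdef, mul_neg, Pi.add_def] using h6
  -- G is strictly increasing on (A, ∞)
  have hMono : StrictMonoOn G (Set.Ioi A) := by
    intro x hx y hy hxy
    simp only [Set.mem_Ioi] at hx hy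
    have hx0 : 0 < x := lt_trans hA hx
    have hy0 : 0 < y := lt_trans hA hy
    have part1 : (c * x - 1) * Real.exp (c * x) < (c * y - 1) * Real.exp (c * y) :=
      auxMonoExp (by positivity : (0:ℝ) ≤ c * x) (by positivity : (0:ℝ) ≤ c * y)
        (by nlinarith)
    have hxA : 0 < x - A := sub_pos.mpr hx
    have hyA : 0 < y - A := sub_pos.mpr hy
    have hq : y / (y - A) < x / (x - A) := by
      rw [div_lt_div_iff₀ hyA hxA]
      nlinarith
    have hq0 : 0 < y / (y - A) := div_pos hy0 hyA
    have hsq : (y / (y - A)) ^ 2 < (x / (x - A)) ^ 2 :=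
      pow_lt_pow_left₀ hq hq0.le two_ne_zero
    have part2 : α * k * (y / (y - A)) ^ 2 < α * k * (x / (x - A)) ^ 2 :=
      mul_lt_mul_of_pos_left hsq (mul_pos hα hk)
    simp only [hGdef]
    linarith
  -- G vanishes at rstar
  have hGstar : G rstar = 0 := by
    have hcr : rstar * Real.log 2 / W = c * rstar := by rw [hcdef]; ring
    have he : Real.exp (c * rstar - 1) = Real.exp (c * rstar) / Real.exp 1 := by
      rw [Real.exp_sub]
    have hepos := Real.exp_pos 1
    rw [hcr, eq_div_iff (ne_of_gt hepos), he, mul_assoc,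
      div_mul_cancel₀ _ (ne_of_gt hepos)] at heq
    simp only [hGdef]
    rw [hkdef] at heq ⊢
    linarith
  -- hence G < 0 on (A, rstar)
  have hGneg : ∀ x, A < x → x < rstar → G x < 0 := by
    intro x hx1 hx2
    have := hMono (Set.mem_Ioi.mpr hx1) (Set.mem_Ioi.mpr (lt_trans hx1 hx2)) hx2
    linarith
  -- hence D < 0 on (A, rstar)
  have hDneg : ∀ x, A < x → x < rstar → D x < 0 := by
    intro x hx1 hx2
    have hx0 : 0 < x := lt_trans hA hx1
    have hxA : (0:ℝ) < x - A := sub_pos.mpr hx1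
    have hfac : D x * (k * x ^ 2 / A) = G x := by
      simp only [hDdef, hGdef]
      field_simp
      ring
    have hpos : 0 < k * x ^ 2 / A := by positivity
    have hGx := hGneg x hx1 hx2
    by_contra h
    push_neg at h
    have hprod : (0:ℝ) ≤ D x * (k * x ^ 2 / A) := mul_nonneg h hpos.le
    rw [hfac] at hprod
    linarith
  -- z is strictly decreasing on (A, rM]
  have hanti : StrictAntiOn z (Set.Ioc A rM) := by
    apply strictAntiOn_of_deriv_neg (convex_Ioc A rM)
    · intro x hx
      have hxA : A < x := hx.1
      have hev : ψ =ᶠ[nhds x] z :=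
        Filter.eventuallyEq_of_mem (Ioi_mem_nhds hxA) (fun r hr => (hzψ r hr).symm)
      exact (((hasD x hxA).continuousAt).congr hev).continuousWithinAt
    · intro x hx
      rw [interior_Ioc] at hx
      have hxA : A < x := hx.1
      have hev : z =ᶠ[nhds x] ψ :=
        Filter.eventuallyEq_of_mem (Ioi_mem_nhds hxA) (fun r hr => hzψ r hr)
      have hdz : HasDerivAt z (D x) x := (hasD x hxA).congr_of_eventuallyEq hev
      rw [hdz.deriv]
      exact hDneg x hxA (lt_trans hx.2 hrM₂)
  refine ⟨hanti, ?_⟩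
  intro r hr1 hr2 hne
  exact hanti ⟨hr1, hr2⟩ ⟨hrM₁, le_refl rM⟩ (lt_of_le_of_ne hr2 hne)
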